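/- Let α be a finite set, H ≤ Sym(α), and let L and M be disjoint direct factors of H such that M is d.d.p. indecomposable. If Supp(M) ∩ Supp(L) ≠ ∅, then Supp(M) ⊆ Supp(L). -/

import Mathlib

/-- The support of a subgroup `A ≤ Sym(α)`: the union of the supports of its
elements, i.e. the set of points moved by some element of `A`. -/
def Supp {α : Type*} (A : Subgroup (Equiv.Perm α)) : Set α :=
  {x : α | ∃ a ∈ A, a x ≠ x}

/-- `A` is a disjoint direct factor of `H`: `A ≤ H` and, for every `h ∈ H`, the map
agreeing with `h` on `Supp A` and fixing every point outside `Supp A` is a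
permutation belonging to `A`. -/
def IsDisjointDirectFactor {α : Type*} (H A : Subgroup (Equiv.Perm α)) : Prop :=
  A ≤ H ∧ ∀ h ∈ H, ∃ a ∈ A, (∀ x ∈ Supp A, a x = h x) ∧ ∀ x ∉ Supp A, a x = x

/-- A disjoint direct product decomposition of `K ≤ Sym(α)`: a family of nontrivial
subgroups with pairwise disjoint supports whose join is `K`. -/
def IsDDPDecomposition {α : Type*} (K : Subgroup (Equiv.Perm α)) {r : ℕ}
    (F : Fin r → Subgroup (Equiv.Perm α)) : Prop :=
  (∀ i, F i ≠ ⊥) ∧ (∀ i j, i ≠ j → Disjoint (Supp (F i)) (Supp (F j))) ∧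
    (⨆ i, F i) = K

/-- `K` is d.d.p. indecomposable: it admits no disjoint direct product decomposition
with more than one (nontrivial) factor. -/
def DDPIndecomposable {α : Type*} (K : Subgroup (Equiv.Perm α)) : Prop :=
  ∀ (r : ℕ) (F : Fin r → Subgroup (Equiv.Perm α)), IsDDPDecomposition K F → r ≤ 1

/-
Write `U = Supp L`. Restricting `m ∈ M` first to `Supp L` (inside `L`) and then to `Supp M`
(inside `M`) gives an element of `M` that agrees with `m` on `U` and fixes the rest, so `M` is the
join of its elements supported in `U` and those supported in `Uᶜ`. These two subgroups have
disjoint supports, so by indecomposability one of them is trivial: the first is excluded by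
`Supp M ∩ U ≠ ∅`, and the second gives `Supp M ⊆ U`.
-/

section

variable {α : Type*}

theorem apply_eq_of_notMem_supp {A : Subgroup (Equiv.Perm α)} {a : Equiv.Perm α} (ha : a ∈ A)
    {x : α} (hx : x ∉ Supp A) : a x = x :=
  not_not.mp fun h => hx ⟨a, ha, h⟩

def supportedIn (M : Subgroup (Equiv.Perm α)) (U : Set α) : Subgroup (Equiv.Perm α) :=
  M ⊓ fixingSubgroup (Equiv.Perm α) Uᶜ

theorem mem_supportedIn {M : Subgroup (Equiv.Perm α)} {U : Set α} {g : Equiv.Perm α} :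
    g ∈ supportedIn M U ↔ g ∈ M ∧ ∀ x ∉ U, g x = x := by
  simp [supportedIn, mem_fixingSubgroup_iff, Equiv.Perm.smul_def]

theorem supp_supportedIn_subset (M : Subgroup (Equiv.Perm α)) (U : Set α) :
    Supp (supportedIn M U) ⊆ U :=
  fun x ⟨_, hg, hx⟩ => not_not.mp fun hxU => hx ((mem_supportedIn.mp hg).2 x hxU)

theorem disjoint_supp_supportedIn_compl (M : Subgroup (Equiv.Perm α)) (U : Set α) :
    Disjoint (Supp (supportedIn M U)) (Supp (supportedIn M Uᶜ)) :=
  Set.disjoint_of_subset (supp_supportedIn_subset M U) (supp_supportedIn_subset M Uᶜ)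
    disjoint_compl_right

theorem IsDisjointDirectFactor.exists_mem_eqOn_supp {H L M : Subgroup (Equiv.Perm α)}
    (hL : IsDisjointDirectFactor H L) (hM : IsDisjointDirectFactor H M)
    {m : Equiv.Perm α} (hm : m ∈ M) :
    ∃ a ∈ supportedIn M (Supp L), ∀ x ∈ Supp L, a x = m x := by
  obtain ⟨l, hl, hlm, hl_fix⟩ := hL.2 m (hM.1 hm)
  obtain ⟨a, ha, hal, ha_fix⟩ := hM.2 l (hL.1 hl)
  refine ⟨a, mem_supportedIn.mpr ⟨ha, fun x hx => ?_⟩, fun x hx => ?_⟩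
  · by_cases hxM : x ∈ Supp M
    · rw [hal x hxM, hl_fix x hx]
    · exact ha_fix x hxM
  · by_cases hxM : x ∈ Supp M
    · rw [hal x hxM, hlm x hx]
    · rw [ha_fix x hxM, apply_eq_of_notMem_supp hm hxM]

theorem IsDisjointDirectFactor.supportedIn_sup_supportedIn_compl
    {H L M : Subgroup (Equiv.Perm α)}
    (hL : IsDisjointDirectFactor H L) (hM : IsDisjointDirectFactor H M) :
    supportedIn M (Supp L) ⊔ supportedIn M (Supp L)ᶜ = M := by
  refine le_antisymm (sup_le inf_le_left inf_le_left) fun m hm => ?_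
  obtain ⟨a, ha, ham⟩ := hL.exists_mem_eqOn_supp hM hm
  have hb : a⁻¹ * m ∈ supportedIn M (Supp L)ᶜ := by
    refine mem_supportedIn.mpr ⟨M.mul_mem (M.inv_mem (mem_supportedIn.mp ha).1) hm, fun x hx => ?_⟩
    rw [Equiv.Perm.mul_apply, Equiv.Perm.inv_eq_iff_eq, ham x (not_not.mp hx)]
  simpa using Subgroup.mul_mem_sup ha hb

theorem DDPIndecomposable.eq_bot_or_eq_bot {K A B : Subgroup (Equiv.Perm α)}
    (hK : DDPIndecomposable K) (hAB : A ⊔ B = K) (hdisj : Disjoint (Supp A) (Supp B)) :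
    A = ⊥ ∨ B = ⊥ := by
  by_contra! hne
  have hdec : IsDDPDecomposition K ![A, B] := by
    refine ⟨fun i => ?_, fun i j hij => ?_, hAB ▸ ?_⟩
    · fin_cases i <;> simp [hne.1, hne.2]
    · fin_cases i <;> fin_cases j <;> simp_all [hdisj.symm]
    · exact le_antisymm (iSup_le (Fin.forall_fin_two.mpr ⟨le_sup_left, le_sup_right⟩))
        (sup_le (le_iSup ![A, B] 0) (le_iSup ![A, B] 1))
  exact absurd (hK 2 _ hdec) (by norm_num)

end

theorem stmt_10_general {α : Type*} (H L M : Subgroup (Equiv.Perm α))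
    (hL : IsDisjointDirectFactor H L) (hM : IsDisjointDirectFactor H M)
    (hind : DDPIndecomposable M)
    (hmeet : Supp M ∩ Supp L ≠ ∅) :
    Supp M ⊆ Supp L := by
  have hsup := hL.supportedIn_sup_supportedIn_compl hM
  rcases hind.eq_bot_or_eq_bot hsup (disjoint_supp_supportedIn_compl M (Supp L)) with hA | hB
  · rw [hA, bot_sup_eq] at hsup
    have hdisj : Disjoint (Supp M) (Supp L) :=
      Set.subset_compl_iff_disjoint_right.mp (hsup ▸ supp_supportedIn_subset M _)
    exact absurd (Set.disjoint_iff_inter_eq_empty.mp hdisj) hmeet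
  · rw [hB, sup_bot_eq] at hsup
    exact hsup ▸ supp_supportedIn_subset M _

/-- Let `L` and `M` be disjoint direct factors of `H ≤ Sym(α)`
(`α` finite) with `M` d.d.p. indecomposable.  If `Supp M ∩ Supp L ≠ ∅` then
`Supp M ⊆ Supp L`. -/
theorem stmt_10 {α : Type*} [Finite α] (H L M : Subgroup (Equiv.Perm α))
    (hL : IsDisjointDirectFactor H L) (hM : IsDisjointDirectFactor H M)
    (hind : DDPIndecomposable M)
    (hmeet : Supp M ∩ Supp L ≠ ∅) :
    Supp M ⊆ Supp L :=
  stmt_10_general H L M hL hM hind hmeet
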